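/- Let x be a complex number with x² + x ≠ 0. Then for every natural number n > 0, ∑_{i=0}^{n−1} Kᵢ(x) = [K_{n+1}(x) + K_{n−1}(x) + (1 − x²)Kₙ(x) + 2x² + x − 3] / (x² + x). -/
import Mathlib


/-- Tribonacci-Lucas polynomials over ℂ. -/
def tribLucasPoly (x : ℂ) : ℕ → ℂ
  | 0 => 3
  | 1 => x ^ 2
  | 2 => x ^ 4 + 2 * x
  | n + 3 => x ^ 2 * tribLucasPoly x (n + 2) + x * tribLucasPoly x (n + 1) + tribLucasPoly x n

lemma tribLucasPoly_sum_aux (x : ℂ) (n : ℕ) (hn : 1 ≤ n) :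
    (x ^ 2 + x) * ∑ i ∈ Finset.range n, tribLucasPoly x i =
      tribLucasPoly x (n + 1) + tribLucasPoly x (n - 1) +
        (1 - x ^ 2) * tribLucasPoly x n + 2 * x ^ 2 + x - 3 := by
  induction n, hn using Nat.le_induction with
  | base => simp [tribLucasPoly]; ring
  | succ n hn ih =>
    obtain ⟨m, rfl⟩ := Nat.exists_eq_add_of_le hn
    rw [Finset.sum_range_succ, mul_add, ih]
    simp only [Nat.add_sub_cancel, show 1 + m + 1 + 1 = m + 3 by omega,
      show 1 + m + 1 = m + 2 by omega, show 1 + m = m + 1 by omega,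
      show m + 1 - 1 = m by omega, tribLucasPoly]
    ring

theorem tribLucasPoly_sum (x : ℂ) (hx : x ^ 2 + x ≠ 0) (n : ℕ) (hn : 0 < n) :
    ∑ i ∈ Finset.range n, tribLucasPoly x i =
      (tribLucasPoly x (n + 1) + tribLucasPoly x (n - 1) +
        (1 - x ^ 2) * tribLucasPoly x n + 2 * x ^ 2 + x - 3) / (x ^ 2 + x) := by
  rw [eq_div_iff hx, mul_comm, tribLucasPoly_sum_aux x n hn]
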